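/- Fix an integer k ≥ 2 and let W be a k × k row-stochastic, strictly positive, invertible matrix with image simplex Δ*. Fix r₀ with 0 < r₀ ≤ (2·log₂ e)/9, set r = √(r₀/(2·log₂ e)), let N = ⌊1/r⌋, and let N* be the set of probability vectors in Δ* whose coordinates are all integer multiples of 1/N; for P ∈ N* let R_P be its neighbor set. Let p_min = inf{ P y : P ∈ Δ*, y ∈ Fin k } and p_max = sup{ P y : P ∈ Δ*, y ∈ Fin k }. Then for every P ∈ N* and every Q ∈ R_P, the third absolute central moment of the log-likelihood ratio satisfies T(P‖Q) ≤ (36·√2·(log₂ e)^{3/2} / (p_min²·(1−p_max)³))·r₀^{3/2}. -/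

import Mathlib

/-- Kullback–Leibler divergence in bits between two (strictly positive) probability
vectors on `Fin k`. -/
noncomputable def klD {k : ℕ} (P Q : Fin k → ℝ) : ℝ :=
  ∑ y, P y * Real.logb 2 (P y / Q y)

/-- Third absolute central moment of the log-likelihood ratio (in bits). -/
noncomputable def Tllr {k : ℕ} (P Q : Fin k → ℝ) : ℝ :=
  ∑ y, P y * |Real.logb 2 (P y / Q y) - klD P Q| ^ 3

/-- `Q` is a neighbor of `P` at grid spacing `1/N`. -/
def IsNeighbor {k : ℕ} (N : ℕ) (P Q : Fin k → ℝ) : Prop :=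
  ∃ a b : Fin k, a ≠ b ∧ Q a = P a + 1 / N ∧ Q b = P b - 1 / N ∧
    ∀ i, i ≠ a → i ≠ b → Q i = P i

/-!
Only the two coordinates where the neighbour `Q` differs from `P` contribute to
`E|log₂ (P/Q)|³`, and on them `|log₂ (P y / Q y)| ≤ |P y - Q y| / (log 2 · min (P y) (Q y))`,
where `|P y - Q y| = 1/N ≤ min (P y) (Q y)` because grid points are positive multiples of `1/N`.
Combined with `E|X - EX|³ ≤ 8 E|X|³` this gives `T(P‖Q) ≤ 32 / (log 2 · N)³ / p_min²`.
Since `1/N ≤ 3r/2` for `r ≤ 1/3` and `r₀ = 2 log₂ e · r²`, this is at most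
`108 (log₂ e)³ r³ / p_min² ≤ 144 (log₂ e)³ r³ / (p_min² (1 - p_max)³)`, the claimed bound.
Positivity of `W` keeps every entry of every point of `Δ*` in `[w, 1 - w]` for some `w > 0`,
so `0 < p_min` and `p_max < 1`.
-/

open Finset Real

theorem sum_mul_abs_sub_pow_le {ι : Type*} (s : Finset ι) (w X : ι → ℝ)
    (hw0 : ∀ i ∈ s, 0 ≤ w i) (hw1 : ∑ i ∈ s, w i = 1) (n : ℕ) :
    ∑ i ∈ s, w i * |X i - ∑ j ∈ s, w j * X j| ^ n ≤ 2 ^ n * ∑ i ∈ s, w i * |X i| ^ n := by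
  rcases Nat.eq_zero_or_pos n with rfl | hn
  · simp [hw1]
  set m := ∑ j ∈ s, w j * X j
  have hjensen : |m| ^ n ≤ ∑ i ∈ s, w i * |X i| ^ n := calc
    |m| ^ n ≤ (∑ i ∈ s, w i * |X i|) ^ n := by
      gcongr
      refine (abs_sum_le_sum_abs _ _).trans_eq (sum_congr rfl fun i hi => ?_)
      rw [abs_mul, abs_of_nonneg (hw0 i hi)]
    _ ≤ ∑ i ∈ s, w i * |X i| ^ n :=
      (convexOn_pow n).map_sum_le hw0 hw1 fun i _ => abs_nonneg (X i)
  calc ∑ i ∈ s, w i * |X i - m| ^ n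
      ≤ ∑ i ∈ s, w i * (2 ^ (n - 1) * (|X i| ^ n + |m| ^ n)) := by
        gcongr with i hi
        · exact hw0 i hi
        · exact (pow_le_pow_left₀ (abs_nonneg _) (abs_sub _ _) n).trans
            (add_pow_le (abs_nonneg _) (abs_nonneg _) n)
    _ = 2 ^ (n - 1) * (∑ i ∈ s, w i * |X i| ^ n + |m| ^ n) := by
        simp only [mul_left_comm _ (2 ^ (n - 1) : ℝ), ← mul_sum, mul_add, sum_add_distrib,
          ← sum_mul, hw1, one_mul]
    _ ≤ 2 ^ (n - 1) * (2 * ∑ i ∈ s, w i * |X i| ^ n) := by gcongr; linarith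
    _ = 2 ^ n * ∑ i ∈ s, w i * |X i| ^ n := by
        rw [← mul_assoc, ← pow_succ, Nat.sub_add_cancel hn]

theorem abs_log_div_le {x y : ℝ} (hx : 0 < x) (hy : 0 < y) :
    |log (x / y)| ≤ |x - y| / min x y := by
  wlog hxy : x ≤ y generalizing x y
  · rw [← abs_neg, ← log_inv, inv_div, abs_sub_comm, min_comm]
    exact this hy hx (le_of_not_ge hxy)
  have hlog : log (y / x) ≤ (y - x) / x := by
    have := log_le_sub_one_of_pos (div_pos hy hx)
    rwa [sub_div, div_self hx.ne']
  rw [← abs_neg, ← log_inv, inv_div, min_eq_left hxy, abs_sub_comm,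
    abs_of_nonneg (log_nonneg ((one_le_div hx).2 hxy)), abs_of_nonneg (sub_nonneg.2 hxy)]
  exact hlog

theorem mul_abs_logb_div_pow_three_le {b x y : ℝ} (hb : 1 < b) (hx : 0 < x) (hy : 0 < y)
    (hxy : |x - y| ≤ min x y) :
    x * |logb b (x / y)| ^ 3 ≤ 2 * |x - y| ^ 3 / (log b ^ 3 * min x y ^ 2) := by
  have hlogb : 0 < log b := log_pos hb
  have hx2 : x ≤ 2 * min x y := by
    rcases le_total x y with h | h
    · rw [min_eq_left h]; linarith
    · rw [min_eq_right h, abs_of_nonneg (sub_nonneg.2 h)] at *; linarith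
  have hL : |logb b (x / y)| ≤ |x - y| / (log b * min x y) := by
    rw [logb, abs_div, abs_of_pos hlogb, mul_comm, ← div_div]
    gcongr
    exact abs_log_div_le hx hy
  calc x * |logb b (x / y)| ^ 3 ≤ 2 * min x y * (|x - y| / (log b * min x y)) ^ 3 := by
        gcongr
    _ = 2 * |x - y| ^ 3 / (log b ^ 3 * min x y ^ 2) := by
        field_simp

theorem Tllr_le_sum_abs_sub_pow {k : ℕ} {P Q : Fin k → ℝ} {m : ℝ} (hm : 0 < m)
    (hP : ∀ y, m ≤ P y) (hQ : ∀ y, m ≤ Q y) (hsum : ∑ y, P y = 1)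
    (hclose : ∀ y, |P y - Q y| ≤ min (P y) (Q y)) :
    Tllr P Q ≤ 16 * ∑ y, |P y - Q y| ^ 3 / (log 2 ^ 3 * m ^ 2) := by
  have hPpos : ∀ y, 0 < P y := fun y => hm.trans_le (hP y)
  calc Tllr P Q ≤ 2 ^ 3 * ∑ y, P y * |logb 2 (P y / Q y)| ^ 3 :=
        sum_mul_abs_sub_pow_le univ P _ (fun y _ => (hPpos y).le) hsum 3
    _ ≤ 2 ^ 3 * ∑ y, 2 * |P y - Q y| ^ 3 / (log 2 ^ 3 * m ^ 2) := by
        gcongr with y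
        refine (mul_abs_logb_div_pow_three_le one_lt_two (hPpos y) (hm.trans_le (hQ y))
          (hclose y)).trans ?_
        gcongr
        exact le_min (hP y) (hQ y)
    _ = 16 * ∑ y, |P y - Q y| ^ 3 / (log 2 ^ 3 * m ^ 2) := by
        simp only [mul_div_assoc, ← mul_sum]; ring

theorem one_div_le_of_eq_natCast_div {N a : ℕ} {x : ℝ} (hx : 0 < x) (h : x = a / N) :
    1 / N ≤ x := by
  subst h
  have : a ≠ 0 := by rintro rfl; simp at hx
  gcongr
  exact_mod_cast Nat.one_le_iff_ne_zero.2 this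

theorem IsNeighbor.abs_sub_le {k N : ℕ} {P Q : Fin k → ℝ} (h : IsNeighbor N P Q) (y : Fin k) :
    |P y - Q y| ≤ 1 / N := by
  obtain ⟨a, b, -, ha, hb, hother⟩ := h
  by_cases hya : y = a
  · subst hya; simp [ha]
  by_cases hyb : y = b
  · subst hyb; simp [hb]
  simp [hother y hya hyb]

theorem IsNeighbor.sum_abs_sub_pow {k N : ℕ} {P Q : Fin k → ℝ} (h : IsNeighbor N P Q) (n : ℕ)
    (hn : n ≠ 0) : ∑ y, |P y - Q y| ^ n = 2 / N ^ n := by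
  obtain ⟨a, b, hab, ha, hb, hother⟩ := h
  rw [Fintype.sum_eq_add a b hab fun y hy => by simp [hother y hy.1 hy.2, hn]]
  simp [ha, hb]
  ring

theorem IsNeighbor.Tllr_le {k N : ℕ} {P Q : Fin k → ℝ} {m : ℝ} (h : IsNeighbor N P Q)
    (hm : 0 < m) (hP : ∀ y, m ≤ P y) (hQ : ∀ y, m ≤ Q y) (hsum : ∑ y, P y = 1)
    (hPgrid : ∀ i, ∃ a : ℕ, P i = a / N) (hQgrid : ∀ i, ∃ a : ℕ, Q i = a / N) :
    Tllr P Q ≤ 32 / (log 2 * N) ^ 3 / m ^ 2 := by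
  have hgrid {R : Fin k → ℝ} (hR : ∀ y, m ≤ R y) (hRgrid : ∀ i, ∃ a : ℕ, R i = a / N) (y) :
      1 / N ≤ R y := by
    obtain ⟨a, ha⟩ := hRgrid y
    exact one_div_le_of_eq_natCast_div (hm.trans_le (hR y)) ha
  have hclose (y) : |P y - Q y| ≤ min (P y) (Q y) :=
    (h.abs_sub_le y).trans (le_min (hgrid hP hPgrid y) (hgrid hQ hQgrid y))
  calc Tllr P Q ≤ 16 * ∑ y, |P y - Q y| ^ 3 / (log 2 ^ 3 * m ^ 2) :=
        Tllr_le_sum_abs_sub_pow hm hP hQ hsum hclose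
    _ = 32 / (log 2 * N) ^ 3 / m ^ 2 := by
        rw [← sum_div, h.sum_abs_sub_pow 3 three_ne_zero]
        ring

theorem Matrix.exists_pos_forall_mem_Icc {ι : Type*} [Fintype ι] [Nontrivial ι]
    {W : Matrix ι ι ℝ} (hpos : ∀ x y, 0 < W x y) (hrow : ∀ x, ∑ y, W x y = 1) :
    ∃ w > 0, ∀ x y, W x y ∈ Set.Icc w (1 - w) := by
  classical
  obtain ⟨⟨x₀, y₀⟩, hmin⟩ := Finite.exists_min fun p : ι × ι => W p.1 p.2
  refine ⟨W x₀ y₀, hpos x₀ y₀, fun x y => ⟨hmin (x, y), ?_⟩⟩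
  obtain ⟨y', hy'⟩ := exists_ne y
  have hpair : W x y + W x y' ≤ 1 := by
    rw [← hrow x, ← sum_pair hy'.symm]
    exact sum_le_univ_sum_of_nonneg fun z => (hpos x z).le
  linarith [hmin (x, y')]

section simplexImage

variable {ι : Type*} [Fintype ι] {W : Matrix ι ι ℝ}

def simplexImage (W : Matrix ι ι ℝ) : Set (ι → ℝ) :=
  {f | ∃ p : ι → ℝ, (∀ i, 0 ≤ p i) ∧ (∑ i, p i = 1) ∧ ∀ y, f y = ∑ x, p x * W x y}

def simplexImageEntries (W : Matrix ι ι ℝ) : Set ℝ :=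
  {x | ∃ f ∈ simplexImage W, ∃ y, f y = x}

theorem sum_eq_one_of_mem_simplexImage (hrow : ∀ x, ∑ y, W x y = 1) {f : ι → ℝ}
    (hf : f ∈ simplexImage W) : ∑ y, f y = 1 := by
  obtain ⟨p, -, hp1, hf⟩ := hf
  simp only [hf]
  rw [sum_comm]
  simp [← mul_sum, hrow, hp1]

theorem apply_mem_Icc_of_mem_simplexImage {lo hi : ℝ} (hW : ∀ x y, W x y ∈ Set.Icc lo hi)
    {f : ι → ℝ} (hf : f ∈ simplexImage W) (y : ι) : f y ∈ Set.Icc lo hi := by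
  obtain ⟨p, hp0, hp1, hf⟩ := hf
  rw [hf]
  exact (convex_Icc lo hi).sum_mem (fun i _ => hp0 i) hp1 fun x _ => hW x y

theorem simplexImageEntries_bounds [Nontrivial ι] (hpos : ∀ x y, 0 < W x y)
    (hrow : ∀ x, ∑ y, W x y = 1) {f₀ : ι → ℝ} (hf₀ : f₀ ∈ simplexImage W) :
    0 < sInf (simplexImageEntries W) ∧ sSup (simplexImageEntries W) < 1 ∧
      ∀ f ∈ simplexImage W, ∀ y,
        f y ∈ Set.Icc (sInf (simplexImageEntries W)) (sSup (simplexImageEntries W)) := by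
  obtain ⟨w, hw, hW⟩ := Matrix.exists_pos_forall_mem_Icc hpos hrow
  have hS : simplexImageEntries W ⊆ Set.Icc w (1 - w) := by
    rintro _ ⟨f, hf, y, rfl⟩
    exact apply_mem_Icc_of_mem_simplexImage hW hf y
  have hne : (simplexImageEntries W).Nonempty := ⟨_, f₀, hf₀, Classical.arbitrary ι, rfl⟩
  refine ⟨hw.trans_le (le_csInf hne fun x hx => (hS hx).1),
    (csSup_le hne fun x hx => (hS hx).2).trans_lt (by linarith), fun f hf y => ?_⟩
  exact ⟨csInf_le (bddBelow_Icc.mono hS) ⟨f, hf, y, rfl⟩,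
    le_csSup (bddAbove_Icc.mono hS) ⟨f, hf, y, rfl⟩⟩

end simplexImage

theorem one_div_natFloor_one_div_le {r : ℝ} (hr : 0 < r) (hr3 : r ≤ 1 / 3) :
    1 / (⌊1 / r⌋₊ : ℝ) ≤ 3 / 2 * r := by
  have h3 : 3 ≤ 1 / r := by rw [le_div_iff₀ hr]; linarith
  have hN : 2 / 3 * (1 / r) ≤ ⌊1 / r⌋₊ := by linarith [Nat.sub_one_lt_floor (1 / r)]
  calc 1 / (⌊1 / r⌋₊ : ℝ) ≤ 1 / (2 / 3 * (1 / r)) :=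
        one_div_le_one_div_of_le (by positivity) hN
    _ = 3 / 2 * r := by field_simp

theorem sqrt_two_mul_rpow_three_halves {c r : ℝ} (hc : 0 ≤ c) (hr : 0 ≤ r) :
    √2 * c ^ ((3 : ℝ) / 2) * (2 * c * r ^ 2) ^ ((3 : ℝ) / 2) = 4 * c ^ 3 * r ^ 3 := by
  rw [rpow_div_two_eq_sqrt _ hc, rpow_div_two_eq_sqrt _ (by positivity),
    sqrt_mul (by positivity), sqrt_mul zero_le_two, sqrt_sq hr]
  norm_cast
  calc √2 * √c ^ 3 * (√2 * √c * r) ^ 3 = (√2 ^ 2) ^ 2 * (√c ^ 2) ^ 3 * r ^ 3 := by ring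
    _ = 4 * c ^ 3 * r ^ 3 := by rw [sq_sqrt zero_le_two, sq_sqrt hc]; ring

theorem mul_pow_three_div_le_rpow_three_halves {c r δ m M : ℝ} (hc : 0 < c) (hr : 0 ≤ r)
    (hδ0 : 0 ≤ δ) (hδ : δ ≤ 3 / 2 * r) (hM0 : 0 ≤ M) (hM1 : M < 1) :
    32 * (c * δ) ^ 3 / m ^ 2 ≤
      36 * √2 * c ^ ((3 : ℝ) / 2) / (m ^ 2 * (1 - M) ^ 3) * (2 * c * r ^ 2) ^ ((3 : ℝ) / 2) := by
  have hgap : (1 - M) ^ 3 ≤ 1 := pow_le_one₀ (by linarith) (by linarith)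
  calc 32 * (c * δ) ^ 3 / m ^ 2 ≤ 32 * (c * (3 / 2 * r)) ^ 3 / m ^ 2 := by gcongr
    _ = 108 * c ^ 3 * r ^ 3 / m ^ 2 / 1 := by ring
    _ ≤ 144 * c ^ 3 * r ^ 3 / m ^ 2 / (1 - M) ^ 3 := by
        gcongr
        norm_num
    _ = _ := by
        rw [div_div]
        linear_combination
          (-36 / (m ^ 2 * (1 - M) ^ 3)) * sqrt_two_mul_rpow_three_halves hc.le hr

theorem llr_third_moment_bound_general (k : ℕ)
    (W : Matrix (Fin k) (Fin k) ℝ)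
    (hpos : ∀ x y, 0 < W x y) (hrow : ∀ x, ∑ y, W x y = 1)
    (Δs : Set (Fin k → ℝ))
    (hΔs : Δs = {f | ∃ p : Fin k → ℝ, (∀ i, 0 ≤ p i) ∧ (∑ i, p i = 1) ∧
        ∀ y, f y = ∑ x, p x * W x y})
    (pmin pmax : ℝ)
    (hpmin : pmin = sInf {x : ℝ | ∃ f ∈ Δs, ∃ y : Fin k, f y = x})
    (hpmax : pmax = sSup {x : ℝ | ∃ f ∈ Δs, ∃ y : Fin k, f y = x})
    (r₀ : ℝ) (hr₀ : 0 < r₀) (hr₀' : r₀ ≤ 2 * Real.logb 2 (Real.exp 1) / 9)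
    (r : ℝ) (hr : r = Real.sqrt (r₀ / (2 * Real.logb 2 (Real.exp 1))))
    (N : ℕ) (hN : N = ⌊1 / r⌋₊)
    (Nstar : Set (Fin k → ℝ))
    (hNstar : Nstar = {f ∈ Δs | ∀ i, ∃ a : ℕ, f i = (a : ℝ) / N}) :
    ∀ P ∈ Nstar, ∀ Q ∈ Nstar, IsNeighbor N P Q →
      Tllr P Q ≤ (36 * Real.sqrt 2 * Real.logb 2 (Real.exp 1) ^ ((3 : ℝ) / 2)
          / (pmin ^ 2 * (1 - pmax) ^ 3)) * r₀ ^ ((3 : ℝ) / 2) := by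
  subst hNstar
  rintro P ⟨hPΔ, hPgrid⟩ Q ⟨hQΔ, hQgrid⟩ hPQ
  obtain ⟨a, b, hab, -⟩ := id hPQ
  have : Nontrivial (Fin k) := ⟨a, b, hab⟩
  replace hΔs : Δs = simplexImage W := hΔs
  subst hΔs
  replace hpmin : pmin = sInf (simplexImageEntries W) := hpmin
  replace hpmax : pmax = sSup (simplexImageEntries W) := hpmax
  obtain ⟨hpmin_pos, hpmax_lt, hentries⟩ := simplexImageEntries_bounds hpos hrow hPΔ
  rw [← hpmin] at hpmin_pos hentries
  rw [← hpmax] at hpmax_lt hentries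
  have hc : logb 2 (exp 1) = (log 2)⁻¹ := by rw [logb, log_exp, one_div]
  have hcpos : 0 < logb 2 (exp 1) := by rw [hc]; positivity
  have hrpos : 0 < r := hr ▸ sqrt_pos.2 (by positivity)
  have hr3 : r ≤ 1 / 3 := by
    rw [hr, sqrt_le_iff, div_le_iff₀ (by positivity)]
    constructor <;> linarith
  have hr₀eq : r₀ = 2 * logb 2 (exp 1) * r ^ 2 := by
    rw [hr, sq_sqrt (by positivity)]; field_simp
  calc Tllr P Q ≤ 32 / (log 2 * N) ^ 3 / pmin ^ 2 :=
        hPQ.Tllr_le hpmin_pos (fun y => (hentries P hPΔ y).1) (fun y => (hentries Q hQΔ y).1)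
          (sum_eq_one_of_mem_simplexImage hrow hPΔ) hPgrid hQgrid
    _ = 32 * (logb 2 (exp 1) * (1 / N)) ^ 3 / pmin ^ 2 := by rw [hc]; field_simp
    _ ≤ _ := hr₀eq ▸ mul_pow_three_div_le_rpow_three_halves hcpos hrpos.le (by positivity)
          (hN ▸ one_div_natFloor_one_div_le hrpos hr3) 
          (hpmin_pos.le.trans ((hentries P hPΔ a).1.trans (hentries P hPΔ a).2)) hpmax_lt

/-- for grid points `P ∈ N*` and neighbors `Q ∈ R_P` at packing radius
`r₀ ≤ (2·log₂ e)/9`, the third absolute central moment of the log-likelihood ratio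
satisfies `T(P‖Q) ≤ (36·√2·(log₂ e)^{3/2}/(p_min²·(1−p_max)³))·r₀^{3/2}`. -/
theorem llr_third_moment_bound (k : ℕ) (hk : 2 ≤ k)
    (W : Matrix (Fin k) (Fin k) ℝ)
    (hpos : ∀ x y, 0 < W x y) (hrow : ∀ x, ∑ y, W x y = 1) (hinv : W.det ≠ 0)
    (Δs : Set (Fin k → ℝ))
    (hΔs : Δs = {f | ∃ p : Fin k → ℝ, (∀ i, 0 ≤ p i) ∧ (∑ i, p i = 1) ∧
        ∀ y, f y = ∑ x, p x * W x y})
    (pmin pmax : ℝ)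
    (hpmin : pmin = sInf {x : ℝ | ∃ f ∈ Δs, ∃ y : Fin k, f y = x})
    (hpmax : pmax = sSup {x : ℝ | ∃ f ∈ Δs, ∃ y : Fin k, f y = x})
    (r₀ : ℝ) (hr₀ : 0 < r₀) (hr₀' : r₀ ≤ 2 * Real.logb 2 (Real.exp 1) / 9)
    (r : ℝ) (hr : r = Real.sqrt (r₀ / (2 * Real.logb 2 (Real.exp 1))))
    (N : ℕ) (hN : N = ⌊1 / r⌋₊)
    (Nstar : Set (Fin k → ℝ))
    (hNstar : Nstar = {f ∈ Δs | ∀ i, ∃ a : ℕ, f i = (a : ℝ) / N}) :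
    ∀ P ∈ Nstar, ∀ Q ∈ Nstar, IsNeighbor N P Q →
      Tllr P Q ≤ (36 * Real.sqrt 2 * Real.logb 2 (Real.exp 1) ^ ((3 : ℝ) / 2)
          / (pmin ^ 2 * (1 - pmax) ^ 3)) * r₀ ^ ((3 : ℝ) / 2) :=
  llr_third_moment_bound_general k W hpos hrow Δs hΔs pmin pmax hpmin hpmax r₀ hr₀ hr₀' r hr N hN
    Nstar hNstar
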